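/- arXiv:2305.04678 — 4 statements merged into one kernel-verified Lean document; each statement's English description precedes it below -/
import Mathlib

section
/- If f : X × X* → (-∞,+∞] is a convex lower semicontinuous function on a reflexive Banach space X times its dual satisfying f(x,v) ≥ ⟨v,x⟩ for all (x,v), then the contact set A_f := {(x,v) : f(x,v) = ⟨v,x⟩} is a monotone operator, i.e. for all (x,v),(y,w) ∈ A_f one has ⟨v−w, x−y⟩ ≥ 0. -/
/-!
At the midpoint `m` of two contact points `z, w`, convexity and `f ≥ ⟨·,·⟩` give
`⟨m.2, m.1⟩ ≤ f m ≤ (f z + f w) / 2 = (⟨z.2, z.1⟩ + ⟨w.2, w.1⟩) / 2`, and expanding the bilinear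
pairing shows that the gap between the two ends is exactly `⟨z.2 - w.2, z.1 - w.1⟩ / 4`.
-/

section ContactSet

variable {E F : Type*} [AddCommGroup E] [Module ℝ E] [AddCommGroup F] [Module ℝ F]

theorem pairing_midpoint_eq (B : F →ₗ[ℝ] E →ₗ[ℝ] ℝ) (z w : E × F) :
    B ((1/2 : ℝ) • z + (1/2 : ℝ) • w).2 ((1/2 : ℝ) • z + (1/2 : ℝ) • w).1 =
      (B z.2 z.1 + B w.2 w.1) / 2 - B (z.2 - w.2) (z.1 - w.1) / 4 := by
  simp only [Prod.fst_add, Prod.snd_add, Prod.smul_fst, Prod.smul_snd, map_add, map_smul,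
    map_sub, LinearMap.add_apply, LinearMap.smul_apply, LinearMap.sub_apply, smul_eq_mul]
  ring

theorem pairing_nonneg_of_mem_contactSet (B : F →ₗ[ℝ] E →ₗ[ℝ] ℝ) (f : E × F → EReal)
    (hconv : ∀ z w : E × F, ∀ a b : ℝ, 0 ≤ a → 0 ≤ b → a + b = 1 →
      f (a • z + b • w) ≤ (a : EReal) * f z + (b : EReal) * f w)
    (hge : ∀ z : E × F, ((B z.2 z.1 : ℝ) : EReal) ≤ f z)
    {z w : E × F} (hz : f z = B z.2 z.1) (hw : f w = B w.2 w.1) :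
    0 ≤ B (z.2 - w.2) (z.1 - w.1) := by
  set m := (1/2 : ℝ) • z + (1/2 : ℝ) • w
  have hmid : ((B m.2 m.1 : ℝ) : EReal) ≤ (((B z.2 z.1 + B w.2 w.1) / 2 : ℝ) : EReal) :=
    calc ((B m.2 m.1 : ℝ) : EReal)
        ≤ f m := hge m
      _ ≤ ((1/2 : ℝ) : EReal) * f z + ((1/2 : ℝ) : EReal) * f w :=
        hconv z w _ _ (by norm_num) (by norm_num) (by norm_num)
      _ = (((B z.2 z.1 + B w.2 w.1) / 2 : ℝ) : EReal) := by
        rw [hz, hw]; norm_cast; ring_nf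
  have := pairing_midpoint_eq B z w
  linarith [EReal.coe_le_coe_iff.mp hmid]

end ContactSet

theorem stmt0_general {X : Type*} [NormedAddCommGroup X] [NormedSpace ℝ X]
    (f : X × StrongDual ℝ X → EReal)
    (hconv : ∀ z w : X × StrongDual ℝ X, ∀ a b : ℝ, 0 ≤ a → 0 ≤ b → a + b = 1 →
      f (a • z + b • w) ≤ (a : EReal) * f z + (b : EReal) * f w)
    (hge : ∀ z : X × StrongDual ℝ X, ((z.2 z.1 : ℝ) : EReal) ≤ f z) :
    ∀ z ∈ {z : X × StrongDual ℝ X | f z = ((z.2 z.1 : ℝ) : EReal)},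
      ∀ w ∈ {z : X × StrongDual ℝ X | f z = ((z.2 z.1 : ℝ) : EReal)},
        0 ≤ (z.2 - w.2) (z.1 - w.1) :=
  fun _ hz _ hw => pairing_nonneg_of_mem_contactSet (ContinuousLinearMap.coeLM ℝ) f hconv hge hz hw

/-- If `f : X × X* → (-∞,+∞]` is a convex lower semicontinuous function on
a (reflexive) Banach space times its dual with `f(x,v) ≥ ⟨v,x⟩`, then the contact set
`A_f = {(x,v) : f(x,v) = ⟨v,x⟩}` is monotone. -/
theorem stmt0 {X : Type*} [NormedAddCommGroup X] [NormedSpace ℝ X] [CompleteSpace X]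
    (f : X × StrongDual ℝ X → EReal)
    (hconv : ∀ z w : X × StrongDual ℝ X, ∀ a b : ℝ, 0 ≤ a → 0 ≤ b → a + b = 1 →
      f (a • z + b • w) ≤ (a : EReal) * f z + (b : EReal) * f w)
    (hlsc : LowerSemicontinuous f)
    (hge : ∀ z : X × StrongDual ℝ X, ((z.2 z.1 : ℝ) : EReal) ≤ f z) :
    ∀ z ∈ {z : X × StrongDual ℝ X | f z = ((z.2 z.1 : ℝ) : EReal)},
      ∀ w ∈ {z : X × StrongDual ℝ X | f z = ((z.2 z.1 : ℝ) : EReal)},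
        0 ≤ (z.2 - w.2) (z.1 - w.1) :=
  stmt0_general f hconv hge
end

section
/- Let (Ω,B) be a standard Borel space with nonatomic probability measure ℙ, X a separable Banach space, p ∈ [1,∞). If μ, ν ∈ P_p(X) (Borel probability measures with finite p-th moment) and X̄ ∈ L^p(Ω,ℙ;X) satisfies X̄♯ℙ = μ, then for every ε > 0 there exists Y ∈ L^p(Ω,ℙ;X) with Y♯ℙ = ν and ‖X̄ − Y‖_{L^p} ≤ W_p(μ,ν) + ε, where W_p is the p-Wasserstein distance. -/
/-!
Take a coupling `γ` of `μ` and `ν` whose cost is within `ε / 2` of `W_p(μ, ν)`, and partition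
`E` into countably many Borel cells `D i` of diameter at most `ε / 2`. On each cell `X⁻¹(D i)`
the measure `ℙ` is atomless and has the mass `γ (D i × E)`, so, because standard Borel spaces
embed into `ℝ`, the cdf and quantile transforms push it onto `γ` restricted to `D i × E`.
Gluing these maps gives `V = (V₁, V₂)` with law `γ` and `‖X - V₁‖ ≤ ε / 2`, and `Y = V₂`
works by Minkowski's inequality.
-/

open MeasureTheory

/-- The `p`-Wasserstein distance between two Borel measures on a normed space,
defined as the infimum over couplings of the `L^p` transport cost. -/
noncomputable def Wp {E : Type*} [NormedAddCommGroup E] [MeasurableSpace E]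
    (p : ℝ) (μ ν : Measure E) : ℝ :=
  sInf ((fun γ : Measure (E × E) => (∫ z, ‖z.1 - z.2‖ ^ p ∂γ) ^ (1 / p)) ''
    {γ | IsProbabilityMeasure γ ∧ γ.map Prod.fst = μ ∧ γ.map Prod.snd = ν})

open Set Function

namespace ProbabilityTheory

variable (ρ : Measure ℝ)

/-- The generalized inverse of `cdf ρ`. Off `(0, 1)` the infimum would be a junk value of `sInf`,
and is replaced by `0`. -/
noncomputable def quantile : ℝ → ℝ :=
  (Ioo 0 1).piecewise (fun t => sInf {x | t ≤ cdf ρ x}) 0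

theorem quantile_le_iff {t : ℝ} (ht : t ∈ Ioo 0 1) (x : ℝ) :
    quantile ρ t ≤ x ↔ t ≤ cdf ρ x := by
  have hne : {x | t ≤ cdf ρ x}.Nonempty :=
    ((tendsto_cdf_atTop ρ).eventually_const_le ht.2).exists
  have hbdd : BddBelow {x | t ≤ cdf ρ x} := by
    obtain ⟨a, ha⟩ := ((tendsto_cdf_atBot ρ).eventually_lt_const ht.1).exists
    exact ⟨a, fun y hy => le_of_not_ge fun hya => (hy.trans (monotone_cdf ρ hya)).not_gt ha⟩
  rw [quantile, piecewise_eq_of_mem _ _ _ ht]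
  refine ⟨fun h => ?_, fun h => csInf_le hbdd h⟩
  refine le_trans ?_ (monotone_cdf ρ h)
  refine ge_of_tendsto (((cdf ρ).right_continuous _).tendsto.mono_left
    (nhdsWithin_mono _ Ioi_subset_Ici_self)) (eventually_nhdsWithin_of_forall fun z hz => ?_)
  obtain ⟨y, hy, hyz⟩ := exists_lt_of_csInf_lt hne hz
  exact hy.trans (monotone_cdf ρ hyz.le)

theorem measurable_quantile : Measurable (quantile ρ) := by
  refine measurable_of_Iic fun x => ?_
  have h : quantile ρ ⁻¹' Iic x =
      Ioo 0 1 ∩ Iic (cdf ρ x) ∪ (Ioo 0 1)ᶜ ∩ (0 : ℝ → ℝ) ⁻¹' Iic x := by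
    ext t
    by_cases ht : t ∈ Ioo 0 1
    · simp [ht, quantile_le_iff ρ ht]
    · simp [ht, quantile]
  rw [h]
  exact (measurableSet_Ioo.inter measurableSet_Iic).union
    (measurableSet_Ioo.compl.inter (measurable_const measurableSet_Iic))

theorem map_quantile [IsProbabilityMeasure ρ] :
    (volume.restrict (Ioo 0 1)).map (quantile ρ) = ρ := by
  have : IsProbabilityMeasure (volume.restrict (Ioo (0 : ℝ) 1)) := ⟨by simp⟩
  have : IsProbabilityMeasure ((volume.restrict (Ioo (0 : ℝ) 1)).map (quantile ρ)) :=
    Measure.isProbabilityMeasure_map (measurable_quantile ρ).aemeasurable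
  refine Measure.ext_of_Iic _ _ fun x => ?_
  have h : quantile ρ ⁻¹' Iic x ∩ Ioo 0 1 = Iic (cdf ρ x) ∩ Ioo 0 1 := by
    ext t
    simp only [mem_inter_iff, mem_preimage, mem_Iic, and_congr_left_iff]
    exact fun ht => quantile_le_iff ρ ht x
  rw [Measure.map_apply (measurable_quantile ρ) measurableSet_Iic,
    Measure.restrict_apply (measurable_quantile ρ measurableSet_Iic), h,
    ← Measure.restrict_apply measurableSet_Iic, Measure.restrict_congr_set Ioo_ae_eq_Ioc,
    Measure.restrict_apply measurableSet_Iic, Iic_inter_Ioc_of_le (cdf_le_one ρ x),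
    Real.volume_Ioc, sub_zero, ofReal_cdf]

theorem leftLim_cdf [IsProbabilityMeasure ρ] [NullSingletonClass ρ] (a : ℝ) :
    leftLim (cdf ρ) a = cdf ρ a := by
  have h := (cdf ρ).measure_singleton a
  rw [measure_cdf, measure_singleton, eq_comm, ENNReal.ofReal_eq_zero, sub_nonpos] at h
  exact le_antisymm ((monotone_cdf ρ).leftLim_le le_rfl) h

theorem cdf_quantile [IsProbabilityMeasure ρ] [NullSingletonClass ρ] {t : ℝ} (ht : t ∈ Ioo 0 1) :
    cdf ρ (quantile ρ t) = t := by
  refine le_antisymm ?_ ((quantile_le_iff ρ ht _).1 le_rfl)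
  rw [← leftLim_cdf]
  refine le_of_tendsto ((monotone_cdf ρ).tendsto_leftLim _)
    (eventually_nhdsWithin_of_forall fun x hx => ?_)
  exact (not_le.1 fun h => (not_le.2 hx) ((quantile_le_iff ρ ht x).2 h)).le

theorem map_cdf [IsProbabilityMeasure ρ] [NullSingletonClass ρ] :
    ρ.map (cdf ρ) = volume.restrict (Ioo 0 1) := by
  have hid : cdf ρ ∘ quantile ρ =ᵐ[volume.restrict (Ioo 0 1)] id := by
    filter_upwards [ae_restrict_mem measurableSet_Ioo] with t ht
    exact cdf_quantile ρ ht
  calc ρ.map (cdf ρ) = ((volume.restrict (Ioo 0 1)).map (quantile ρ)).map (cdf ρ) := by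
        rw [map_quantile]
    _ = (volume.restrict (Ioo 0 1)).map id := by
        rw [Measure.map_map (monotone_cdf ρ).measurable (measurable_quantile ρ),
          Measure.map_congr hid]
    _ = volume.restrict (Ioo 0 1) := Measure.map_id

end ProbabilityTheory

theorem MeasurableEmbedding.nullSingletonClass_map {α β : Type*} [MeasurableSpace α]
    [MeasurableSpace β] {f : α → β} (hf : MeasurableEmbedding f) (μ : Measure α)
    [NullSingletonClass μ] : NullSingletonClass (μ.map f) :=
  ⟨fun x => by
    rw [hf.map_apply]
    exact (subsingleton_singleton.preimage hf.injective).measure_zero μ⟩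

theorem exists_measurable_partition_dist_le {E : Type*} [PseudoMetricSpace E]
    [TopologicalSpace.SeparableSpace E] [Nonempty E] [MeasurableSpace E]
    [OpensMeasurableSpace E] {δ : ℝ} (hδ : 0 < δ) :
    ∃ D : ℕ → Set E, (∀ i, MeasurableSet (D i)) ∧ Pairwise (Disjoint on D) ∧
      (∀ x, ∃ i, x ∈ D i) ∧ ∀ i, ∀ x ∈ D i, ∀ y ∈ D i, dist x y ≤ δ := by
  set c := TopologicalSpace.denseSeq E
  refine ⟨disjointed fun i => Metric.ball (c i) (δ / 2),
    MeasurableSet.disjointed fun _ => measurableSet_ball, disjoint_disjointed _,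
    fun x => ?_, fun i x hx y hy => ?_⟩
  · obtain ⟨i, hi⟩ := (TopologicalSpace.denseRange_denseSeq E).exists_dist_lt x (half_pos hδ)
    rw [← mem_iUnion, iUnion_disjointed]
    exact mem_iUnion.2 ⟨i, hi⟩
  · have hx := disjointed_subset _ i hx
    have hy := disjointed_subset _ i hy
    rw [Metric.mem_ball] at hx hy
    linarith [dist_triangle_right x y (c i)]

section StandardBorel

open ProbabilityTheory

variable {Ω G : Type*} [MeasurableSpace Ω] [StandardBorelSpace Ω]
  [MeasurableSpace G] [StandardBorelSpace G] [Nonempty G]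

theorem exists_measurable_map_uniform_eq (ρ : Measure G) [IsProbabilityMeasure ρ] :
    ∃ f : ℝ → G, Measurable f ∧ (volume.restrict (Ioo 0 1)).map f = ρ := by
  obtain ⟨e, he⟩ := exists_measurableEmbedding_real G
  -- a measurable left inverse of `e`
  obtain ⟨g, hg, hge⟩ := he.exists_measurable_extend measurable_id fun _ => inferInstance
  have := Measure.isProbabilityMeasure_map (μ := ρ) he.measurable.aemeasurable
  refine ⟨g ∘ quantile (ρ.map e), hg.comp (measurable_quantile _), ?_⟩
  rw [← Measure.map_map hg (measurable_quantile _), map_quantile,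
    Measure.map_map hg he.measurable, hge, Measure.map_id]

omit [Nonempty G] in
theorem exists_measurable_map_eq_of_nullSingletonClass (P : Measure Ω) [IsProbabilityMeasure P]
    [NullSingletonClass P] (ρ : Measure G) [IsProbabilityMeasure ρ] :
    ∃ f : Ω → G, Measurable f ∧ P.map f = ρ := by
  have : Nonempty G := nonempty_of_isProbabilityMeasure ρ
  obtain ⟨e, he⟩ := exists_measurableEmbedding_real Ω
  have := he.nullSingletonClass_map P
  have := Measure.isProbabilityMeasure_map (μ := P) he.measurable.aemeasurable
  obtain ⟨f, hf, hfρ⟩ := exists_measurable_map_uniform_eq ρ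
  have hF : Measurable (cdf (P.map e)) := (monotone_cdf _).measurable
  refine ⟨f ∘ cdf (P.map e) ∘ e, hf.comp (hF.comp he.measurable), ?_⟩
  rw [← Measure.map_map hf (hF.comp he.measurable), ← Measure.map_map hF he.measurable,
    map_cdf, hfρ]

theorem exists_measurable_map_eq_of_measure_univ_eq (P : Measure Ω) [IsFiniteMeasure P]
    [NullSingletonClass P] (ρ : Measure G) [IsFiniteMeasure ρ] (hPρ : P univ = ρ univ) :
    ∃ f : Ω → G, Measurable f ∧ P.map f = ρ := by
  rcases eq_zero_or_neZero P with rfl | hP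
  · refine ⟨fun _ => Classical.arbitrary G, measurable_const, ?_⟩
    rw [Measure.map_zero, eq_comm, ← Measure.measure_univ_eq_zero, ← hPρ, Measure.coe_zero,
      Pi.zero_apply]
  have hρ : NeZero ρ := ⟨by
    rw [ne_eq, ← Measure.measure_univ_eq_zero, ← hPρ, Measure.measure_univ_eq_zero]
    exact hP.out⟩
  have : NullSingletonClass ((P univ)⁻¹ • P) := ⟨fun x => by simp⟩
  obtain ⟨f, hf, hfρ⟩ :=
    exists_measurable_map_eq_of_nullSingletonClass ((P univ)⁻¹ • P) ((ρ univ)⁻¹ • ρ)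
  refine ⟨f, hf, ?_⟩
  rw [Measure.map_smul, hPρ] at hfρ
  have hc : ρ univ ≠ 0 := (Measure.measure_univ_ne_zero).2 hρ.out
  simpa [smul_smul, ENNReal.mul_inv_cancel hc (measure_ne_top ρ univ)]
    using congrArg (ρ univ • ·) hfρ

theorem exists_measurable_map_eq_of_partition (P : Measure Ω) [IsFiniteMeasure P]
    [NullSingletonClass P] (ρ : Measure G) [IsFiniteMeasure ρ] {T : ℕ → Set Ω} {S : ℕ → Set G}
    (hT : ∀ i, MeasurableSet (T i)) (hTd : Pairwise (Disjoint on T)) (hTcover : ∀ ω, ∃ i, ω ∈ T i)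
    (hS : ∀ i, MeasurableSet (S i)) (hSd : Pairwise (Disjoint on S)) (hScover : ⋃ i, S i = univ)
    (hmass : ∀ i, P (T i) = ρ (S i)) :
    ∃ f : Ω → G, Measurable f ∧ P.map f = ρ ∧ ∀ i, ∀ᵐ ω ∂P.restrict (T i), f ω ∈ S i := by
  classical
  choose v hv hvρ using fun i => exists_measurable_map_eq_of_measure_univ_eq
    (P.restrict (T i)) (ρ.restrict (S i)) (by simp [hmass i])
  set f : Ω → G := fun ω => v (Nat.find (hTcover ω)) ω
  have hfv : ∀ i, f =ᵐ[P.restrict (T i)] v i := fun i => by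
    filter_upwards [ae_restrict_mem (hT i)] with ω hω
    have hfind : Nat.find (hTcover ω) = i := by
      by_contra hne
      exact disjoint_left.1 (hTd hne) (Nat.find_spec (hTcover ω)) hω
    simp only [f, hfind]
  have hP : P = Measure.sum fun i => P.restrict (T i) := by
    rw [← Measure.restrict_iUnion hTd hT, iUnion_eq_univ_iff.2 hTcover, Measure.restrict_univ]
  have hfm : Measurable f := Measurable.find (p := fun i ω => ω ∈ T i) hv hT hTcover
  refine ⟨f, hfm, ?_, fun i => ?_⟩
  · rw [hP, Measure.map_sum hfm.aemeasurable]
    simp_rw [Measure.map_congr (hfv _), hvρ]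
    rw [← Measure.restrict_iUnion hSd hS, hScover, Measure.restrict_univ]
  · have hvS : ∀ᵐ ω ∂P.restrict (T i), v i ω ∈ S i :=
      ae_of_ae_map (hv i).aemeasurable ((hvρ i).symm ▸ ae_restrict_mem (hS i))
    filter_upwards [hfv i, hvS] with ω h1 h2
    rwa [h1]

theorem exists_measurable_map_eq_of_map_fst_eq {E F : Type*} [PseudoMetricSpace E]
    [TopologicalSpace.SeparableSpace E] [MeasurableSpace E] [OpensMeasurableSpace E]
    [StandardBorelSpace E] [MeasurableSpace F] [StandardBorelSpace F]
    (P : Measure Ω) [IsFiniteMeasure P] [NullSingletonClass P] {X : Ω → E} (hX : AEMeasurable X P)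
    (γ : Measure (E × F)) [IsProbabilityMeasure γ] (hγ : γ.map Prod.fst = P.map X)
    {δ : ℝ} (hδ : 0 < δ) :
    ∃ V : Ω → E × F, Measurable V ∧ P.map V = γ ∧ ∀ᵐ ω ∂P, dist (X ω) (V ω).1 ≤ δ := by
  have : Nonempty (E × F) := nonempty_of_isProbabilityMeasure γ
  have : Nonempty E := ⟨(Classical.arbitrary (E × F)).1⟩
  obtain ⟨D, hDm, hDd, hDcover, hDdist⟩ := exists_measurable_partition_dist_le (E := E) hδ
  obtain ⟨X', hX'm, hXX'⟩ := hX
  have hmass : ∀ i, P (X' ⁻¹' D i) = γ (Prod.fst ⁻¹' D i) := fun i => by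
    rw [← Measure.map_apply hX'm (hDm i), ← Measure.map_congr hXX', ← hγ,
      Measure.map_apply measurable_fst (hDm i)]
  obtain ⟨V, hV, hVγ, hVD⟩ := exists_measurable_map_eq_of_partition P γ
    (fun i => hX'm (hDm i)) (fun _ _ h => (hDd h).preimage _)
    (fun ω => hDcover (X' ω)) (fun i => measurable_fst (hDm i))
    (fun _ _ h => (hDd h).preimage _) (iUnion_eq_univ_iff.2 fun z => hDcover z.1) hmass
  refine ⟨V, hV, hVγ, ?_⟩
  have hcover : ⋃ i, X' ⁻¹' D i = univ := iUnion_eq_univ_iff.2 fun ω => hDcover _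
  have hclose : ∀ᵐ ω ∂P, dist (X' ω) (V ω).1 ≤ δ := by
    rw [← Measure.restrict_univ (μ := P), ← hcover, ae_restrict_iUnion_iff]
    intro i
    filter_upwards [hVD i, ae_restrict_mem (hX'm (hDm i))] with ω h1 h2
    exact hDdist i _ h2 _ h1
  filter_upwards [hXX', hclose] with ω h1 h2
  rwa [h1]

end StandardBorel

section Lp

variable {Ω E : Type*} [MeasurableSpace Ω] [NormedAddCommGroup E] {p : ℝ}

theorem memLp_of_map_eq [MeasurableSpace E] [OpensMeasurableSpace E] [SecondCountableTopology E]
    {P : Measure Ω} {ν : Measure E} (hp : 0 < p)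
    {Y : Ω → E} (hY : AEMeasurable Y P) (hlaw : P.map Y = ν)
    (hν : Integrable (fun x => ‖x‖ ^ p) ν) : MemLp Y (ENNReal.ofReal p) P := by
  have hid : MemLp id (ENNReal.ofReal p) (P.map Y) := by
    rw [← integrable_norm_rpow_iff aestronglyMeasurable_id (by simpa using hp)
      ENNReal.ofReal_ne_top, ENNReal.toReal_ofReal hp.le, hlaw]
    exact hν
  exact (memLp_map_measure_iff aestronglyMeasurable_id hY).1 hid

theorem MemLp.rpow_integral_norm_rpow_eq {P : Measure Ω} (hp : 0 < p) {f : Ω → E}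
    (hf : MemLp f (ENNReal.ofReal p) P) :
    (∫ ω, ‖f ω‖ ^ p ∂P) ^ (1 / p) = (eLpNorm f (ENNReal.ofReal p) P).toReal := by
  rw [hf.eLpNorm_eq_integral_rpow_norm (by simpa using hp) ENNReal.ofReal_ne_top,
    ENNReal.toReal_ofReal hp.le, ENNReal.toReal_ofReal (by positivity), one_div]

theorem rpow_integral_norm_sub_rpow_le_of_ae_dist_le {P : Measure Ω} [IsProbabilityMeasure P]
    (hp : 1 ≤ p) {X Y Z : Ω → E} (hX : MemLp X (ENNReal.ofReal p) P)
    (hY : MemLp Y (ENNReal.ofReal p) P) (hZ : MemLp Z (ENNReal.ofReal p) P) {δ : ℝ}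
    (hXZ : ∀ᵐ ω ∂P, dist (X ω) (Z ω) ≤ δ) :
    (∫ ω, ‖X ω - Y ω‖ ^ p ∂P) ^ (1 / p) ≤ δ + (∫ ω, ‖Z ω - Y ω‖ ^ p ∂P) ^ (1 / p) := by
  have hp0 : 0 < p := by linarith
  have hδ : 0 ≤ δ := let ⟨ω, hω⟩ := hXZ.exists; dist_nonneg.trans hω
  have hXZ' : eLpNorm (fun ω => X ω - Z ω) (ENNReal.ofReal p) P ≤ ENNReal.ofReal δ := by
    simpa using eLpNorm_le_of_ae_bound (p := ENNReal.ofReal p) (hXZ.mono fun ω h => by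
      rwa [← dist_eq_norm])
  have htri : eLpNorm (fun ω => X ω - Y ω) (ENNReal.ofReal p) P ≤
      ENNReal.ofReal δ + eLpNorm (fun ω => Z ω - Y ω) (ENNReal.ofReal p) P :=
    calc eLpNorm (fun ω => X ω - Y ω) (ENNReal.ofReal p) P
        = eLpNorm ((fun ω => X ω - Z ω) + fun ω => Z ω - Y ω) (ENNReal.ofReal p) P := by
          congr 1; ext ω; simp
      _ ≤ eLpNorm (fun ω => X ω - Z ω) (ENNReal.ofReal p) P +
          eLpNorm (fun ω => Z ω - Y ω) (ENNReal.ofReal p) P :=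
          eLpNorm_add_le (hX.sub hZ).aestronglyMeasurable (hZ.sub hY).aestronglyMeasurable
            (by simpa using hp)
      _ ≤ _ := by gcongr
  have hZY : eLpNorm (fun ω => Z ω - Y ω) (ENNReal.ofReal p) P ≠ ⊤ := (hZ.sub hY).2.ne
  rw [MemLp.rpow_integral_norm_rpow_eq (f := fun ω => X ω - Y ω) hp0 (hX.sub hY),
    MemLp.rpow_integral_norm_rpow_eq (f := fun ω => Z ω - Y ω) hp0 (hZ.sub hY),
    ← ENNReal.toReal_ofReal hδ, ← ENNReal.toReal_add ENNReal.ofReal_ne_top hZY]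
  exact ENNReal.toReal_mono (ENNReal.add_ne_top.2 ⟨ENNReal.ofReal_ne_top, hZY⟩) htri

end Lp

theorem exists_coupling_rpow_integral_lt_Wp_add {E : Type*} [NormedAddCommGroup E]
    [MeasurableSpace E] (p : ℝ) (μ ν : Measure E) [IsProbabilityMeasure μ]
    [IsProbabilityMeasure ν] {ε : ℝ} (hε : 0 < ε) :
    ∃ γ : Measure (E × E), IsProbabilityMeasure γ ∧ γ.map Prod.fst = μ ∧
      γ.map Prod.snd = ν ∧ (∫ z, ‖z.1 - z.2‖ ^ p ∂γ) ^ (1 / p) < Wp p μ ν + ε := by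
  have hne : {γ : Measure (E × E) |
      IsProbabilityMeasure γ ∧ γ.map Prod.fst = μ ∧ γ.map Prod.snd = ν}.Nonempty :=
    ⟨μ.prod ν, inferInstance, by simp, by simp⟩
  obtain ⟨_, ⟨γ, hγ, rfl⟩, hlt⟩ := Real.lt_sInf_add_pos
    (hne.image fun γ : Measure (E × E) => (∫ z, ‖z.1 - z.2‖ ^ p ∂γ) ^ (1 / p)) hε
  exact ⟨γ, hγ.1, hγ.2.1, hγ.2.2, hlt⟩

theorem stmt12_general {Ω E : Type*} [MeasurableSpace Ω] [StandardBorelSpace Ω]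
    [NormedAddCommGroup E] [CompleteSpace E]
    [SecondCountableTopology E] [MeasurableSpace E] [BorelSpace E]
    (ℙ : Measure Ω) [IsProbabilityMeasure ℙ] [NullSingletonClass ℙ]
    (p : ℝ) (hp : 1 ≤ p)
    (μ ν : Measure E) [IsProbabilityMeasure μ] [IsProbabilityMeasure ν]
    (hμ : Integrable (fun x => ‖x‖ ^ p) μ) (hν : Integrable (fun x => ‖x‖ ^ p) ν)
    (X : Ω → E) (hX : MemLp X (ENNReal.ofReal p) ℙ) (hlaw : Measure.map X ℙ = μ) :
    ∀ ε > (0 : ℝ), ∃ Y : Ω → E, MemLp Y (ENNReal.ofReal p) ℙ ∧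
      Measure.map Y ℙ = ν ∧
      (∫ ω, ‖X ω - Y ω‖ ^ p ∂ℙ) ^ (1 / p) ≤ Wp p μ ν + ε := by
  intro ε hε
  have hp0 : 0 < p := by linarith
  obtain ⟨γ, hγ, hγμ, hγν, hγcost⟩ := exists_coupling_rpow_integral_lt_Wp_add p μ ν (half_pos hε)
  obtain ⟨V, hV, hVγ, hVX⟩ := exists_measurable_map_eq_of_map_fst_eq ℙ hX.aemeasurable γ
    (hγμ.trans hlaw.symm) (half_pos hε)
  have hVμ : ℙ.map (fun ω => (V ω).1) = μ := by
    rw [← hγμ, ← hVγ, Measure.map_map measurable_fst hV]; rfl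
  have hVν : ℙ.map (fun ω => (V ω).2) = ν := by
    rw [← hγν, ← hVγ, Measure.map_map measurable_snd hV]; rfl
  have hYLp := memLp_of_map_eq hp0 hV.snd.aemeasurable hVν hν
  refine ⟨fun ω => (V ω).2, hYLp, hVν, ?_⟩
  have hcost : ∫ ω, ‖(V ω).1 - (V ω).2‖ ^ p ∂ℙ = ∫ z, ‖z.1 - z.2‖ ^ p ∂γ := by
    rw [← hVγ, integral_map hV.aemeasurable (by fun_prop : Measurable fun z : E × E =>
      ‖z.1 - z.2‖ ^ p).aestronglyMeasurable]
  calc (∫ ω, ‖X ω - (V ω).2‖ ^ p ∂ℙ) ^ (1 / p)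
      ≤ ε / 2 + (∫ ω, ‖(V ω).1 - (V ω).2‖ ^ p ∂ℙ) ^ (1 / p) :=
        rpow_integral_norm_sub_rpow_le_of_ae_dist_le hp hX hYLp
          (memLp_of_map_eq hp0 hV.fst.aemeasurable hVμ hμ) hVX
    _ ≤ Wp p μ ν + ε := by rw [hcost]; linarith

/-- Given `μ, ν ∈ P_p(X)` and a random variable `X̄ ∈ L^p(Ω,ℙ;X)` with
law `μ` on a nonatomic standard Borel probability space, for every `ε > 0` there is
`Y ∈ L^p(Ω,ℙ;X)` with law `ν` and `‖X̄ − Y‖_{L^p} ≤ W_p(μ,ν) + ε`. -/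
theorem stmt12 {Ω E : Type*} [MeasurableSpace Ω] [StandardBorelSpace Ω]
    [NormedAddCommGroup E] [NormedSpace ℝ E] [CompleteSpace E]
    [SecondCountableTopology E] [MeasurableSpace E] [BorelSpace E]
    (ℙ : Measure Ω) [IsProbabilityMeasure ℙ] [NullSingletonClass ℙ]
    (p : ℝ) (hp : 1 ≤ p)
    (μ ν : Measure E) [IsProbabilityMeasure μ] [IsProbabilityMeasure ν]
    (hμ : Integrable (fun x => ‖x‖ ^ p) μ) (hν : Integrable (fun x => ‖x‖ ^ p) ν)
    (X : Ω → E) (hX : MemLp X (ENNReal.ofReal p) ℙ) (hlaw : Measure.map X ℙ = μ) :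
    ∀ ε > (0 : ℝ), ∃ Y : Ω → E, MemLp Y (ENNReal.ofReal p) ℙ ∧
      Measure.map Y ℙ = ν ∧
      (∫ ω, ‖X ω - Y ω‖ ^ p ∂ℙ) ^ (1 / p) ≤ Wp p μ ν + ε :=
  stmt12_general ℙ p hp μ ν hμ hν X hX hlaw
end

section
/- Let (Ω,B,ℙ) be a standard Borel probability space with ℙ nonatomic, let X,X' ∈ L^p(Ω,ℙ;𝖷) and Y,Y' ∈ L^q(Ω,ℙ;𝖸) for separable Banach spaces 𝖷,𝖸 and p,q ∈ [1,∞), and suppose (X,Y)♯ℙ = (X',Y')♯ℙ. Then there exists a sequence of essentially injective measure-preserving maps g_n : Ω → Ω such that X'∘g_n → X in L^p(Ω,ℙ;𝖷) and Y'∘g_n → Y in L^q(Ω,ℙ;𝖸). -/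
/-!
The cumulative distribution function of a nonatomic finite measure on `ℝ` carries it onto a
multiple of Lebesgue measure on `(0, 1]`, and it is injective off a null set, since its nontrivial
fibres lie over countably many values. Composing with a Borel embedding into `ℝ` and inverting
one such map on the set where it is injective gives an essentially injective measure-preserving
map between any two nonatomic finite measures of equal mass on standard Borel spaces.

Now cut `E × F` into countably many measurable cells of diameter `< ε`. By equality of the joint
laws, the preimages of a cell under `(X, Y)` and under `(X', Y')` have equal measure; gluing the
maps between corresponding preimages gives `g` with `(X', Y') ∘ g` within `ε` of `(X, Y)` almost
everywhere, hence in `L^p` and `L^q`.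
-/

open MeasureTheory Filter Topology Set
open scoped ENNReal

namespace MeasureTheory

section EssInjective

variable {α β : Type*} [MeasurableSpace α]

def EssInjective (f : α → β) (μ : Measure α) : Prop :=
  ∃ S : Set α, MeasurableSet S ∧ μ Sᶜ = 0 ∧ InjOn f S

theorem essInjective_of_ae_mem {f : α → β} {μ : Measure α} {S : Set α} (hS : ∀ᵐ x ∂μ, x ∈ S)
    (hf : InjOn f S) : EssInjective f μ :=
  ⟨(toMeasurable μ Sᶜ)ᶜ, (measurableSet_toMeasurable μ _).compl,
    by rwa [compl_compl, measure_toMeasurable],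
    hf.mono (compl_subset_comm.1 (subset_toMeasurable μ Sᶜ))⟩

theorem EssInjective.smul_measure {f : α → β} {μ : Measure α} (hf : EssInjective f μ)
    (c : ℝ≥0∞) : EssInjective f (c • μ) := by
  obtain ⟨S, hS, hSc, hinj⟩ := hf
  exact ⟨S, hS, by simp [hSc], hinj⟩

theorem EssInjective.comp_of_injective [MeasurableSpace β] {γ : Type*} {g : β → γ} {f : α → β}
    {μ : Measure α} (hg : EssInjective g (μ.map f)) (hf : Measurable f)
    (hf' : Function.Injective f) :
    EssInjective (g ∘ f) μ := by
  obtain ⟨S, hS, hSc, hinj⟩ := hg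
  refine ⟨f ⁻¹' S, hf hS, ?_, fun x hx y hy hxy => hf' (hinj hx hy hxy)⟩
  rwa [← preimage_compl, ← Measure.map_apply hf hS.compl]

end EssInjective

theorem Measure.nullSingletonClass_map_of_injective {α β : Type*} [MeasurableSpace α]
    [MeasurableSpace β] [MeasurableSingletonClass β] (μ : Measure α) [NullSingletonClass μ]
    {f : α → β} (hf : Measurable f) (hf' : Function.Injective f) :
    NullSingletonClass (μ.map f) :=
  ⟨fun y => by
    rw [Measure.map_apply hf (measurableSet_singleton y)]
    exact Set.Subsingleton.measure_zero (fun a ha b hb => hf' (ha.trans hb.symm)) μ⟩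

instance Measure.instNullSingletonClassSMul {α : Type*} [MeasurableSpace α] (μ : Measure α)
    [NullSingletonClass μ] (c : ℝ≥0∞) : NullSingletonClass (c • μ) :=
  ⟨fun x => by simp [measure_singleton]⟩

theorem Measure.sum_restrict_preimage_singleton {Ω ι : Type*} [MeasurableSpace Ω]
    [MeasurableSpace ι] [Countable ι] [MeasurableSingletonClass ι] (μ : Measure Ω) {κ : Ω → ι}
    (hκ : Measurable κ) : Measure.sum (fun k => μ.restrict (κ ⁻¹' {k})) = μ := by
  rw [← Measure.restrict_iUnion (pairwise_disjoint_fiber κ)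
    fun k => hκ (measurableSet_singleton k), ← preimage_iUnion, iUnion_singleton_eq_range,
    range_id', preimage_univ, Measure.restrict_univ]

end MeasureTheory

theorem Monotone.essInjective {f : ℝ → ℝ} (hf : Monotone f) (μ : Measure ℝ)
    [NullSingletonClass (μ.map f)] : EssInjective f μ := by
  set T := {t | ∃ x y, x < y ∧ f x = t ∧ f y = t}
  -- a value taken at two points is also taken at a rational point between them
  have hT : T.Countable := by
    refine (countable_range fun q : ℚ => f q).mono ?_
    rintro t ⟨x, y, hxy, rfl, hyx⟩
    obtain ⟨q, hxq, hqy⟩ := exists_rat_btwn hxy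
    exact ⟨q, le_antisymm (hyx ▸ hf hqy.le) (hf hxq.le)⟩
  refine essInjective_of_ae_mem (S := (f ⁻¹' T)ᶜ) ?_ fun x hx y hy hxy => ?_
  · change μ (f ⁻¹' T)ᶜᶜ = 0
    rw [compl_compl, ← Measure.map_apply hf.measurable hT.measurableSet]
    exact hT.measure_zero _
  · by_contra hne
    rcases lt_or_gt_of_ne hne with h | h
    · exact hx ⟨x, y, h, rfl, hxy.symm⟩
    · exact hy ⟨y, x, h, rfl, hxy⟩

theorem Monotone.exists_preimage_Iic_eq_Iic {f : ℝ → ℝ} (hf : Monotone f) (hc : Continuous f)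
    {t : ℝ} (hlo : ∃ a, f a ≤ t) (hhi : ∃ b, t < f b) :
    ∃ c, f c = t ∧ f ⁻¹' Iic t = Iic c := by
  obtain ⟨a, ha⟩ := hlo
  obtain ⟨b, hb⟩ := hhi
  set s := f ⁻¹' Iic t
  have hbdd : BddAbove s := ⟨b, fun x hx => (hf.reflect_lt (lt_of_le_of_lt hx hb)).le⟩
  have hmem : sSup s ∈ s := (isClosed_Iic.preimage hc).csSup_mem ⟨a, ha⟩ hbdd
  refine ⟨sSup s, le_antisymm hmem ?_, Subset.antisymm (fun x hx => le_csSup hbdd hx)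
    fun x hx => (hf hx).trans hmem⟩
  refine _root_.ge_of_tendsto
    ((hc.tendsto _).mono_left (nhdsWithin_le_nhds (s := Ioi (sSup s))))
    (eventually_nhdsWithin_of_forall fun x hx => ?_)
  by_contra hxt
  exact not_le.2 hx (le_csSup hbdd (not_le.1 hxt).le)

namespace ProbabilityTheory

open Function

theorem continuous_cdf (μ : Measure ℝ) [IsProbabilityMeasure μ] [NullSingletonClass μ] :
    Continuous (cdf μ) := by
  refine continuous_iff_continuousAt.2 fun x =>
    (monotone_cdf μ).continuousAt_iff_leftLim_eq_rightLim.2 ?_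
  have hjump : ENNReal.ofReal (cdf μ x - leftLim (cdf μ) x) = 0 := by
    rw [← StieltjesFunction.measure_singleton, measure_cdf]
    exact measure_singleton x
  rw [StieltjesFunction.rightLim_eq]
  have := (monotone_cdf μ).leftLim_le le_rfl (x := x)
  rw [ENNReal.ofReal_eq_zero] at hjump
  linarith

theorem map_cdf_s13 (μ : Measure ℝ) [IsProbabilityMeasure μ] [NullSingletonClass μ] :
    μ.map (cdf μ) = volume.restrict (Ioc 0 1) := by
  have hc := continuous_cdf μ
  refine Measure.ext_of_Iic _ _ fun t => ?_
  rw [Measure.map_apply hc.measurable measurableSet_Iic, Measure.restrict_apply measurableSet_Iic]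
  by_cases hlo : ∃ a, cdf μ a ≤ t
  · by_cases hhi : ∃ b, t < cdf μ b
    · obtain ⟨c, rfl, hpre⟩ := (monotone_cdf μ).exists_preimage_Iic_eq_Iic hc hlo hhi
      rw [hpre, ← ofReal_cdf, Iic_inter_Ioc_of_le (cdf_le_one μ c), Real.volume_Ioc, sub_zero]
    · push Not at hhi
      have h1 : 1 ≤ t := le_of_tendsto' (tendsto_cdf_atTop μ) hhi
      rw [show cdf μ ⁻¹' Iic t = univ from eq_univ_of_forall hhi, measure_univ,
        inter_eq_right.2 fun x hx => hx.2.trans h1, Real.volume_Ioc, sub_zero, ENNReal.ofReal_one]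
  · push Not at hlo
    have h0 : t ≤ 0 := ge_of_tendsto' (tendsto_cdf_atBot μ) fun a => (hlo a).le
    rw [show cdf μ ⁻¹' Iic t = ∅ from eq_empty_of_forall_notMem fun x hx => not_le.2 (hlo x) hx,
      show Iic t ∩ Ioc 0 1 = ∅ from eq_empty_of_forall_notMem fun x hx =>
        not_lt.2 (hx.1.trans h0) hx.2.1, measure_empty, measure_empty]

end ProbabilityTheory

open ProbabilityTheory in
theorem Real.exists_map_eq_smul_volume_Ioc (ν : Measure ℝ) [IsFiniteMeasure ν]
    [NullSingletonClass ν] :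
    ∃ F : ℝ → ℝ, Measurable F ∧ ν.map F = ν univ • volume.restrict (Ioc 0 1) ∧
      EssInjective F ν := by
  rcases eq_zero_or_neZero ν with rfl | hne
  · exact ⟨id, measurable_id, by simp, ∅, .empty, by simp, injOn_empty _⟩
  set P := (ν univ)⁻¹ • ν
  have hνP : ν = ν univ • P := by
    rw [smul_smul, ENNReal.mul_inv_cancel (NeZero.ne (ν univ)) (measure_ne_top ν univ), one_smul]
  have hP : P.map (cdf P) = volume.restrict (Ioc 0 1) := map_cdf_s13 P
  have : NullSingletonClass (P.map (cdf P)) := by rw [hP]; infer_instance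
  have hinj := ((monotone_cdf P).essInjective P).smul_measure (ν univ)
  rw [← hνP] at hinj
  refine ⟨cdf P, (continuous_cdf P).measurable, ?_, hinj⟩
  conv_lhs => rw [hνP]
  rw [Measure.map_smul, hP]

theorem exists_map_eq_smul_volume_Ioc {α : Type*} [MeasurableSpace α] [StandardBorelSpace α]
    (μ : Measure α) [IsFiniteMeasure μ] [NullSingletonClass μ] :
    ∃ φ : α → ℝ, Measurable φ ∧ μ.map φ = μ univ • volume.restrict (Ioc 0 1) ∧
      EssInjective φ μ := by
  have he := measurableEmbedding_embeddingReal α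
  have := Measure.nullSingletonClass_map_of_injective μ he.measurable he.injective
  obtain ⟨F, hF, hmap, hinj⟩ := Real.exists_map_eq_smul_volume_Ioc (μ.map (embeddingReal α))
  refine ⟨F ∘ embeddingReal α, hF.comp he.measurable, ?_,
    hinj.comp_of_injective he.measurable he.injective⟩
  rw [← Measure.map_map hF he.measurable, hmap,
    Measure.map_apply he.measurable MeasurableSet.univ, preimage_univ]

theorem exists_measurePreserving_essInjective_of_map_eq {α β γ : Type*} [MeasurableSpace α]
    [MeasurableSpace β] [MeasurableSpace γ] [MeasurableSpace.CountablySeparated β]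
    [StandardBorelSpace γ] [Nonempty γ] {μ : Measure α} {ν : Measure γ} {φ : α → β} {ψ : γ → β}
    (hφ : Measurable φ) (hψ : Measurable ψ) (hmap : μ.map φ = ν.map ψ)
    (hφi : EssInjective φ μ) (hψi : EssInjective ψ ν) :
    ∃ f : α → γ, MeasurePreserving f μ ν ∧ EssInjective f μ := by
  obtain ⟨S, -, hS, hφinj⟩ := hφi
  obtain ⟨G, hG, hGc, hψinj⟩ := hψi
  have := hG.standardBorel
  have hemb : MeasurableEmbedding (fun x : G => ψ x) :=
    (hψ.comp measurable_subtype_coe).measurableEmbedding (injOn_iff_injective.1 hψinj)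
  obtain ⟨τ, hτ, hτψ⟩ := hemb.exists_measurable_extend measurable_subtype_coe fun _ => ‹_›
  have hτψ' : ∀ x ∈ G, τ (ψ x) = x := fun x hx => congrFun hτψ ⟨x, hx⟩
  have hψτ : ∀ b ∈ ψ '' G, ψ (τ b) = b := by
    rintro _ ⟨x, hx, rfl⟩
    rw [hτψ' x hx]
  have himage : ∀ᵐ x ∂μ, φ x ∈ ψ '' G := by
    refine ae_of_ae_map hφ.aemeasurable ?_
    rw [hmap]
    refine (ae_map_iff hψ.aemeasurable (hG.image_of_measurable_injOn hψ hψinj)).2 ?_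
    filter_upwards [show ∀ᵐ x ∂ν, x ∈ G from hGc] with x hx using mem_image_of_mem ψ hx
  refine ⟨τ ∘ φ, ⟨hτ.comp hφ, ?_⟩, essInjective_of_ae_mem
    ((show ∀ᵐ x ∂μ, x ∈ S from hS).and himage) ?_⟩
  · have hid : τ ∘ ψ =ᵐ[ν] id := by
      filter_upwards [show ∀ᵐ x ∂ν, x ∈ G from hGc] with x hx using hτψ' x hx
    rw [← Measure.map_map hτ hφ, hmap, Measure.map_map hτ hψ, Measure.map_congr hid, Measure.map_id]
  · rintro x ⟨hxS, hxG⟩ y ⟨hyS, hyG⟩ hxy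
    exact hφinj hxS hyS (by rw [← hψτ _ hxG, ← hψτ _ hyG]; exact congrArg ψ hxy)

theorem exists_measurePreserving_essInjective {α γ : Type*} [MeasurableSpace α]
    [StandardBorelSpace α] [MeasurableSpace γ] [StandardBorelSpace γ] [Nonempty γ]
    (μ : Measure α) (ν : Measure γ) [IsFiniteMeasure μ] [IsFiniteMeasure ν] [NullSingletonClass μ]
    [NullSingletonClass ν] (hmass : μ univ = ν univ) :
    ∃ f : α → γ, MeasurePreserving f μ ν ∧ EssInjective f μ := by
  obtain ⟨φ, hφ, hφmap, hφi⟩ := exists_map_eq_smul_volume_Ioc μ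
  obtain ⟨ψ, hψ, hψmap, hψi⟩ := exists_map_eq_smul_volume_Ioc ν
  exact exists_measurePreserving_essInjective_of_map_eq hφ hψ (by rw [hφmap, hψmap, hmass])
    hφi hψi

theorem exists_measurePreserving_essInjective_comp_ae_eq {Ω ι : Type*} [MeasurableSpace Ω]
    [StandardBorelSpace Ω] [Nonempty Ω] [MeasurableSpace ι] [Countable ι]
    [MeasurableSingletonClass ι] (μ : Measure Ω) [IsFiniteMeasure μ] [NullSingletonClass μ]
    {κ κ' : Ω → ι} (hκ : Measurable κ) (hκ' : Measurable κ') (hlaw : μ.map κ = μ.map κ') :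
    ∃ g : Ω → Ω, MeasurePreserving g μ μ ∧ EssInjective g μ ∧ κ' ∘ g =ᵐ[μ] κ := by
  set A : ι → Set Ω := fun k => κ ⁻¹' {k}
  set A' : ι → Set Ω := fun k => κ' ⁻¹' {k}
  have hA : ∀ k, MeasurableSet (A k) := fun k => hκ (measurableSet_singleton k)
  have hA' : ∀ k, MeasurableSet (A' k) := fun k => hκ' (measurableSet_singleton k)
  have hmass : ∀ k, μ (A k) = μ (A' k) := fun k => by
    rw [← Measure.map_apply hκ (measurableSet_singleton k), hlaw,
      Measure.map_apply hκ' (measurableSet_singleton k)]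
  choose f hf hfi using fun k => exists_measurePreserving_essInjective (μ.restrict (A k))
    (μ.restrict (A' k)) (by simp only [Measure.restrict_apply_univ, hmass k])
  choose S _ hSc hSinj using hfi
  set g : Ω → Ω := fun ω => f (κ ω) ω
  have hg : Measurable g :=
    (measurable_from_prod_countable_left (f := fun p : Ω × ι => f p.2 p.1)
      fun k => (hf k).measurable).comp (measurable_id.prodMk hκ)
  have hgf : ∀ k, g =ᵐ[μ.restrict (A k)] f k := fun k =>
    ae_restrict_of_forall_mem (hA k) fun ω (hω : κ ω = k) => by
      change f (κ ω) ω = f k ω; rw [hω]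
  have hmap : μ.map g = μ := by
    conv_lhs => rw [← Measure.sum_restrict_preimage_singleton μ hκ]
    conv_rhs => rw [← Measure.sum_restrict_preimage_singleton μ hκ']
    rw [Measure.map_sum hg.aemeasurable]
    exact congrArg Measure.sum (funext fun k => (Measure.map_congr (hgf k)).trans (hf k).map_eq)
  have hgood : ∀ᵐ ω ∂μ, ω ∈ S (κ ω) ∧ κ' (g ω) = κ ω := by
    rw [← Measure.sum_restrict_preimage_singleton μ hκ, Measure.ae_sum_iff]
    intro k
    have hfA' : ∀ᵐ ω ∂μ.restrict (A k), f k ω ∈ A' k :=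
      ae_of_ae_map (hf k).measurable.aemeasurable
        (by rw [(hf k).map_eq]; exact ae_restrict_mem (hA' k))
    filter_upwards [ae_restrict_mem (hA k), hgf k,
      show ∀ᵐ ω ∂μ.restrict (A k), ω ∈ S k from hSc k, hfA']
      with ω (hω : κ ω = k) hgω hωS (hfω : κ' (f k ω) = k)
    rw [hω, hgω, hfω]
    exact ⟨hωS, rfl⟩
  refine ⟨g, ⟨hg, hmap⟩, essInjective_of_ae_mem hgood ?_, hgood.mono fun ω h => h.2⟩
  rintro x ⟨hxS, hx⟩ y ⟨hyS, hy⟩ hxy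
  have hk : κ y = κ x := by rw [← hy, ← hxy, hx]
  simp only [g, hk] at hxy hyS
  exact hSinj (κ x) hxS hyS hxy

theorem exists_measurable_nat_dist_lt_of_eq {W : Type*} [PseudoMetricSpace W]
    [TopologicalSpace.SeparableSpace W] [MeasurableSpace W] [OpensMeasurableSpace W] {ε : ℝ}
    (hε : 0 < ε) : ∃ c : W → ℕ, Measurable c ∧ ∀ x y, c x = c y → dist x y < ε := by
  rcases isEmpty_or_nonempty W with hW | hW
  · exact ⟨fun _ => 0, measurable_const, fun x => isEmptyElim x⟩
  have hz := TopologicalSpace.denseRange_denseSeq W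
  have hex : ∀ x, ∃ n, dist x (TopologicalSpace.denseSeq W n) < ε / 2 :=
    fun x => hz.exists_dist_lt x (half_pos hε)
  refine ⟨fun x => Nat.find (hex x), measurable_find hex fun n => measurableSet_ball, ?_⟩
  intro x y (hxy : Nat.find (hex x) = Nat.find (hex y))
  have hx := Nat.find_spec (hex x)
  have hy := Nat.find_spec (hex y)
  rw [hxy] at hx
  calc dist x y ≤ dist x (TopologicalSpace.denseSeq W (Nat.find (hex y))) +
        dist y (TopologicalSpace.denseSeq W (Nat.find (hex y))) := dist_triangle_right _ _ _
    _ < ε / 2 + ε / 2 := add_lt_add hx hy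
    _ = ε := add_halves ε

theorem exists_measurePreserving_essInjective_ae_dist_lt {Ω W : Type*} [MeasurableSpace Ω]
    [StandardBorelSpace Ω] [Nonempty Ω] [PseudoMetricSpace W] [TopologicalSpace.SeparableSpace W]
    [MeasurableSpace W] [OpensMeasurableSpace W] (μ : Measure Ω) [IsFiniteMeasure μ]
    [NullSingletonClass μ] {Z Z' : Ω → W} (hZ : AEMeasurable Z μ) (hZ' : AEMeasurable Z' μ)
    (hlaw : μ.map Z = μ.map Z') {ε : ℝ} (hε : 0 < ε) :
    ∃ g : Ω → Ω, MeasurePreserving g μ μ ∧ EssInjective g μ ∧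
      ∀ᵐ ω ∂μ, dist (Z' (g ω)) (Z ω) < ε := by
  obtain ⟨c, hc, hcdist⟩ := exists_measurable_nat_dist_lt_of_eq (W := W) hε
  have hlaw' : μ.map (c ∘ hZ.mk Z) = μ.map (c ∘ hZ'.mk Z') := by
    rw [← Measure.map_map hc hZ.measurable_mk, ← Measure.map_map hc hZ'.measurable_mk,
      ← Measure.map_congr hZ.ae_eq_mk, ← Measure.map_congr hZ'.ae_eq_mk, hlaw]
  obtain ⟨g, hg, hgi, hcg⟩ := exists_measurePreserving_essInjective_comp_ae_eq μ
    (hc.comp hZ.measurable_mk) (hc.comp hZ'.measurable_mk) hlaw'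
  refine ⟨g, hg, hgi, ?_⟩
  filter_upwards [hcg, hZ.ae_eq_mk, hg.quasiMeasurePreserving.ae_eq_comp hZ'.ae_eq_mk]
    with ω hω hZω hZ'ω
  simp only [Function.comp_apply] at hω hZ'ω
  rw [hZω, hZ'ω]
  exact hcdist _ _ hω

theorem tendsto_eLpNorm_zero_of_ae_norm_le {α E : Type*} [MeasurableSpace α]
    [NormedAddCommGroup E] {μ : Measure α} [IsFiniteMeasure μ] {ι : Type*} {l : Filter ι}
    {f : ι → α → E} {u : ι → ℝ}
    (hu : Tendsto u l (𝓝 0)) (hf : ∀ i, ∀ᵐ x ∂μ, ‖f i x‖ ≤ u i) (p : ℝ≥0∞) :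
    Tendsto (fun i => eLpNorm (f i) p μ) l (𝓝 0) := by
  have hbound : Tendsto (fun i => μ univ ^ p.toReal⁻¹ * ENNReal.ofReal (u i)) l (𝓝 0) := by
    simpa using ENNReal.Tendsto.const_mul (ENNReal.tendsto_ofReal hu)
      (Or.inr (ENNReal.rpow_ne_top_of_nonneg (by positivity) (measure_ne_top μ univ)))
  exact tendsto_of_tendsto_of_tendsto_of_le_of_le tendsto_const_nhds hbound (fun _ => zero_le)
    fun i => eLpNorm_le_of_ae_bound (hf i)

theorem stmt13_general {Ω E F : Type*} [MeasurableSpace Ω] [StandardBorelSpace Ω]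
    [NormedAddCommGroup E]
    [SecondCountableTopology E] [MeasurableSpace E] [BorelSpace E]
    [NormedAddCommGroup F]
    [SecondCountableTopology F] [MeasurableSpace F] [BorelSpace F]
    (ℙ : Measure Ω) [IsProbabilityMeasure ℙ] [NullSingletonClass ℙ]
    (p q : ℝ)
    (X X' : Ω → E) (Y Y' : Ω → F)
    (hX : MemLp X (ENNReal.ofReal p) ℙ) (hX' : MemLp X' (ENNReal.ofReal p) ℙ)
    (hY : MemLp Y (ENNReal.ofReal q) ℙ) (hY' : MemLp Y' (ENNReal.ofReal q) ℙ)
    (hlaw : Measure.map (fun ω => (X ω, Y ω)) ℙ = Measure.map (fun ω => (X' ω, Y' ω)) ℙ) :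
    ∃ g : ℕ → Ω → Ω,
      (∀ n, Measurable (g n) ∧ Measure.map (g n) ℙ = ℙ ∧
        ∃ S : Set Ω, MeasurableSet S ∧ ℙ Sᶜ = 0 ∧ Set.InjOn (g n) S) ∧
      Tendsto (fun n => eLpNorm (fun ω => X' (g n ω) - X ω) (ENNReal.ofReal p) ℙ)
        atTop (𝓝 0) ∧
      Tendsto (fun n => eLpNorm (fun ω => Y' (g n ω) - Y ω) (ENNReal.ofReal q) ℙ)
        atTop (𝓝 0) := by
  have := nonempty_of_isProbabilityMeasure ℙ
  choose g hg hgi hdist using fun n : ℕ =>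
    exists_measurePreserving_essInjective_ae_dist_lt ℙ
      (hX.1.aemeasurable.prodMk hY.1.aemeasurable) (hX'.1.aemeasurable.prodMk hY'.1.aemeasurable)
      hlaw Nat.one_div_pos_of_nat
  refine ⟨g, fun n => ⟨(hg n).measurable, (hg n).map_eq, hgi n⟩, ?_, ?_⟩
  · refine tendsto_eLpNorm_zero_of_ae_norm_le tendsto_one_div_add_atTop_nhds_zero_nat
      (fun n => ?_) _
    filter_upwards [hdist n] with ω h
    rw [← dist_eq_norm]
    exact ((le_max_left _ _).trans_lt h).le
  · refine tendsto_eLpNorm_zero_of_ae_norm_le tendsto_one_div_add_atTop_nhds_zero_nat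
      (fun n => ?_) _
    filter_upwards [hdist n] with ω h
    rw [← dist_eq_norm]
    exact ((le_max_right _ _).trans_lt h).le

/-- If `(X,Y)` and `(X',Y')` have the same joint law on a nonatomic
standard Borel probability space, then there is a sequence of essentially injective
measure-preserving maps `g_n` with `X'∘g_n → X` in `L^p` and `Y'∘g_n → Y` in `L^q`. -/
theorem stmt13 {Ω E F : Type*} [MeasurableSpace Ω] [StandardBorelSpace Ω]
    [NormedAddCommGroup E] [NormedSpace ℝ E] [CompleteSpace E]
    [SecondCountableTopology E] [MeasurableSpace E] [BorelSpace E]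
    [NormedAddCommGroup F] [NormedSpace ℝ F] [CompleteSpace F]
    [SecondCountableTopology F] [MeasurableSpace F] [BorelSpace F]
    (ℙ : Measure Ω) [IsProbabilityMeasure ℙ] [NullSingletonClass ℙ]
    (p q : ℝ) (hp : 1 ≤ p) (hq : 1 ≤ q)
    (X X' : Ω → E) (Y Y' : Ω → F)
    (hX : MemLp X (ENNReal.ofReal p) ℙ) (hX' : MemLp X' (ENNReal.ofReal p) ℙ)
    (hY : MemLp Y (ENNReal.ofReal q) ℙ) (hY' : MemLp Y' (ENNReal.ofReal q) ℙ)
    (hlaw : Measure.map (fun ω => (X ω, Y ω)) ℙ = Measure.map (fun ω => (X' ω, Y' ω)) ℙ) :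
    ∃ g : ℕ → Ω → Ω,
      (∀ n, Measurable (g n) ∧ Measure.map (g n) ℙ = ℙ ∧
        ∃ S : Set Ω, MeasurableSet S ∧ ℙ Sᶜ = 0 ∧ Set.InjOn (g n) S) ∧
      Tendsto (fun n => eLpNorm (fun ω => X' (g n ω) - X ω) (ENNReal.ofReal p) ℙ)
        atTop (𝓝 0) ∧
      Tendsto (fun n => eLpNorm (fun ω => Y' (g n ω) - Y ω) (ENNReal.ofReal q) ℙ)
        atTop (𝓝 0) :=
  stmt13_general ℙ p q X X' Y Y' hX hX' hY hY' hlaw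
end

section
/- In the setting of the representation theorem for invariant Lipschitz maps (same data): if two maps f₁, f₂ : S[𝖸, ι(D(L))] → 𝖹 are such that fᵢ(·,μ) is continuous on supp μ for every μ ∈ ι(D(L)), and for every X ∈ D(L) one has L X(ω) = fᵢ(X(ω), X♯ℙ) for a.e. ω (i = 1,2), then f₁ = f₂. -/
open MeasureTheory

/-! If `X♯ℙ = μ`, the values of `X` on any full-measure set are dense in `supp μ`, because every
open set meeting `supp μ` has a preimage of positive `ℙ`-measure. Two maps continuous on `supp μ`
that agree at `X ω` for a.e. `ω` therefore agree on all of `supp μ`. -/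

/-- The topological support of a measure: points all of whose open neighbourhoods have
positive measure. -/
def msupport {E : Type*} [TopologicalSpace E] [MeasurableSpace E] (μ : Measure E) :
    Set E :=
  {x | ∀ U : Set E, IsOpen U → x ∈ U → 0 < μ U}

section Support

variable {E : Type*} [TopologicalSpace E] [MeasurableSpace E]

theorem msupport_eq_support (μ : Measure E) : msupport μ = μ.support := by
  simp only [Measure.support_eq_forall_isOpen, msupport]
  exact Set.ext fun x => forall_congr' fun U => forall_comm

theorem ae_mem_msupport [HereditarilyLindelofSpace E] (μ : Measure E) :
    ∀ᵐ x ∂μ, x ∈ msupport μ :=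
  msupport_eq_support μ ▸ Measure.support_mem_ae

variable [OpensMeasurableSpace E] {Ω : Type*} [MeasurableSpace Ω] {ℙ : Measure Ω} {X : Ω → E}

theorem msupport_map_subset_closure_image (hX : AEMeasurable X ℙ) {p : Ω → Prop}
    (hp : ∀ᵐ ω ∂ℙ, p ω) : msupport (ℙ.map X) ⊆ closure (X '' {ω | p ω}) := by
  intro x hx
  rw [mem_closure_iff]
  intro U hU hxU
  have hpos : ℙ (X ⁻¹' U) ≠ 0 := by
    simpa [Measure.map_apply_of_aemeasurable hX hU.measurableSet] using (hx U hU hxU).ne'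
  obtain ⟨ω, hωU, hωp⟩ := ((frequently_ae_iff.mpr hpos).and_eventually hp).exists
  exact ⟨X ω, hωU, ω, hωp, rfl⟩

theorem eqOn_msupport_map_of_ae_eq [HereditarilyLindelofSpace E] {F : Type*}
    [TopologicalSpace F] [T2Space F] (hX : AEMeasurable X ℙ) {g₁ g₂ : E → F}
    (hg₁ : ContinuousOn g₁ (msupport (ℙ.map X))) (hg₂ : ContinuousOn g₂ (msupport (ℙ.map X)))
    (h : ∀ᵐ ω ∂ℙ, g₁ (X ω) = g₂ (X ω)) : Set.EqOn g₁ g₂ (msupport (ℙ.map X)) := by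
  refine Set.EqOn.of_subset_closure
    (s := X '' {ω | g₁ (X ω) = g₂ (X ω) ∧ X ω ∈ msupport (ℙ.map X)}) ?_ hg₁ hg₂ ?_ ?_
  · rintro _ ⟨ω, hω, rfl⟩
    exact hω.1
  · rintro _ ⟨ω, hω, rfl⟩
    exact hω.2
  · exact msupport_map_subset_closure_image hX (h.and (ae_of_ae_map hX (ae_mem_msupport _)))

end Support

theorem stmt18_general {Ω Y Z : Type*} [MeasurableSpace Ω]
    [NormedAddCommGroup Y] [SecondCountableTopology Y] [MeasurableSpace Y] [BorelSpace Y]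
    [NormedAddCommGroup Z] (ℙ : Measure Ω)
    (DL : Set (Ω → Y)) (T : (Ω → Y) → (Ω → Z))
    (hmeas : ∀ X ∈ DL, Measurable X)
    (f₁ f₂ : Y × Measure Y → Z)
    (hc₁ : ∀ μ ∈ (fun X : Ω → Y => Measure.map X ℙ) '' DL,
      ContinuousOn (fun x => f₁ (x, μ)) (msupport μ))
    (hc₂ : ∀ μ ∈ (fun X : Ω → Y => Measure.map X ℙ) '' DL,
      ContinuousOn (fun x => f₂ (x, μ)) (msupport μ))
    (hr₁ : ∀ X ∈ DL, ∀ᵐ ω ∂ℙ, T X ω = f₁ (X ω, Measure.map X ℙ))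
    (hr₂ : ∀ X ∈ DL, ∀ᵐ ω ∂ℙ, T X ω = f₂ (X ω, Measure.map X ℙ)) :
    ∀ (x : Y) (μ : Measure Y), μ ∈ (fun X : Ω → Y => Measure.map X ℙ) '' DL →
      x ∈ msupport μ → f₁ (x, μ) = f₂ (x, μ) := by
  rintro x _ ⟨X, hX, rfl⟩ hx
  have hagree : ∀ᵐ ω ∂ℙ, f₁ (X ω, ℙ.map X) = f₂ (X ω, ℙ.map X) := by
    filter_upwards [hr₁ X hX, hr₂ X hX] with ω h₁ h₂
    exact h₁.symm.trans h₂
  exact eqOn_msupport_map_of_ae_eq (hmeas X hX).aemeasurable (hc₁ _ ⟨X, hX, rfl⟩)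
    (hc₂ _ ⟨X, hX, rfl⟩) hagree hx

/-- uniqueness of the representing map. If `f₁, f₂` are defined on
`S[Y, ι(D(L))]`, have continuous sections `fᵢ(·,μ)` on `supp μ`, and both represent the
operator `L` via `L X(ω) = fᵢ(X(ω), X♯ℙ)` a.e., then `f₁ = f₂` on `S[Y, ι(D(L))]`. -/
theorem stmt18 {Ω Y Z : Type*} [MeasurableSpace Ω] [StandardBorelSpace Ω]
    [NormedAddCommGroup Y] [NormedSpace ℝ Y] [CompleteSpace Y]
    [SecondCountableTopology Y] [MeasurableSpace Y] [BorelSpace Y]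
    [NormedAddCommGroup Z] [NormedSpace ℝ Z] [CompleteSpace Z]
    [SecondCountableTopology Z]
    (ℙ : Measure Ω) [IsProbabilityMeasure ℙ] [NullSingletonClass ℙ]
    (DL : Set (Ω → Y)) (T : (Ω → Y) → (Ω → Z))
    (hmeas : ∀ X ∈ DL, Measurable X)
    (f₁ f₂ : Y × Measure Y → Z)
    (hc₁ : ∀ μ ∈ (fun X : Ω → Y => Measure.map X ℙ) '' DL,
      ContinuousOn (fun x => f₁ (x, μ)) (msupport μ))
    (hc₂ : ∀ μ ∈ (fun X : Ω → Y => Measure.map X ℙ) '' DL,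
      ContinuousOn (fun x => f₂ (x, μ)) (msupport μ))
    (hr₁ : ∀ X ∈ DL, ∀ᵐ ω ∂ℙ, T X ω = f₁ (X ω, Measure.map X ℙ))
    (hr₂ : ∀ X ∈ DL, ∀ᵐ ω ∂ℙ, T X ω = f₂ (X ω, Measure.map X ℙ)) :
    ∀ (x : Y) (μ : Measure Y), μ ∈ (fun X : Ω → Y => Measure.map X ℙ) '' DL →
      x ∈ msupport μ → f₁ (x, μ) = f₂ (x, μ) :=
  stmt18_general ℙ DL T hmeas f₁ f₂ hc₁ hc₂ hr₁ hr₂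
end
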